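/- If u and v are nonzero monomials in the generators s, t of R₂ and u = v as elements of R₂, then u and v are freely equal (identical as words in s and t). -/

import Mathlib

/-!
The tree-indexed vector space `V` over `ℚ` with basis the free monoid on two letters
(encoded as `List Bool`, with `false` the letter `0` and `true` the letter `1`).
The recursive matrices `s = [[0,0],[1,0]]` and `t = [[0,t],[0,s]]` of the ring `R₂`
act on the decomposition `V = ℚ·φ ⊕ 0V ⊕ 1V` by the block-matrix recursion.
-/

noncomputable section

abbrev V : Type := List Bool →₀ ℚ

/-- Prefixing by a letter: the embedding `V → yV`. -/
def pre (b : Bool) : V →ₗ[ℚ] V := Finsupp.lmapDomain ℚ ℚ (List.cons b)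

/-- Value of `s = [[0,0],[1,0]]` on a basis word. -/
def Sfun : List Bool → V
  | [] => 0
  | false :: u => Finsupp.single (true :: u) 1
  | true :: _ => 0

/-- Value of `t = [[0,t],[0,s]]` on a basis word, by recursion. -/
def Tfun : List Bool → V
  | [] => 0
  | false :: _ => 0
  | true :: u => pre false (Tfun u) + pre true (Sfun u)

/-- The generator `s` of `R₂`. -/
def sR : Module.End ℚ V := Finsupp.linearCombination ℚ Sfun

/-- The generator `t` of `R₂`. -/
def tR : Module.End ℚ V := Finsupp.linearCombination ℚ Tfun

/-- The level-preserving operator with block form `[[e,0,0],[0,A,B],[0,C,D]]` on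
`V = ℚ·φ ⊕ 0V ⊕ 1V`, written `e ⊕ [[A,B],[C,D]]`. -/
def blk (e : ℚ) (A B C D : Module.End ℚ V) : Module.End ℚ V :=
  Finsupp.linearCombination ℚ (fun w => match w with
    | [] => Finsupp.single ([] : List Bool) e
    | false :: u => pre false (A (Finsupp.single u 1)) + pre true (C (Finsupp.single u 1))
    | true :: u => pre false (B (Finsupp.single u 1)) + pre true (D (Finsupp.single u 1)))

/-- The monomial in `s, t` given by a word (`false ↦ s`, `true ↦ t`). -/
def mono (w : List Bool) : Module.End ℚ V :=
  (w.map (fun b => if b then tR else sR)).prod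

/-- The ring `R₂` generated by `s` and `t` (a non-unital subring of `End ℚ V`). -/
def R2 : NonUnitalSubring (Module.End ℚ V) := NonUnitalSubring.closure {sR, tR}

end

/-!
Each generator sends a basis word either to `0` or to another basis word, so a monomial acts on
basis words as a partial map `basisRun`, and equal monomials give equal partial maps. The generator
that can act on a word is determined by its first letter (`s` needs `0`, `t` needs `1`), and each
generator strictly increases the `weight` of a word, its value as a binary numeral read least
significant digit first. So if a monomial is nonzero, any pair `x ↦ y` in its graph determines the
word: peel off the rightmost letter, which is forced by `x`, and continue from its image; when one
word runs out first, the leftover letters of the other form a nonempty word fixing a basis word,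
contradicting the weight increase.
-/

noncomputable section

def basisStep : Bool → List Bool → Option (List Bool)
  | false, false :: u => some (true :: u)
  | true, true :: false :: u => some (true :: true :: u)
  | true, true :: true :: u => (basisStep true (true :: u)).map (List.cons false)
  | _, _ => none

def basisRun : List Bool → List Bool → Option (List Bool)
  | [], x => some x
  | b :: w, x => (basisRun w x).bind (basisStep b)

def optSingle (o : Option (List Bool)) : V := o.elim 0 (fun y => Finsupp.single y 1)

def weight : List Bool → ℕ
  | [] => 0
  | b :: u => b.toNat + 2 * weight u

lemma optSingle_injective : Function.Injective optSingle := by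
  rintro (_ | x) (_ | y) h <;>
    simp_all [optSingle, Finsupp.single_left_inj, eq_comm (a := (0 : V))]

lemma pre_single (b : Bool) (u : List Bool) :
    pre b (Finsupp.single u 1) = Finsupp.single (b :: u) 1 := by
  simp [pre, Finsupp.mapDomain_single]

lemma Sfun_eq (x : List Bool) : Sfun x = optSingle (basisStep false x) := by
  rcases x with _ | ⟨_ | _, _⟩ <;> simp [Sfun, basisStep, optSingle]

lemma Tfun_eq (x : List Bool) : Tfun x = optSingle (basisStep true x) := by
  match x with
  | [] | false :: _ | [true] => simp [Tfun, Sfun, basisStep, optSingle]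
  | true :: false :: u => simp [Tfun, Sfun, basisStep, optSingle, pre_single]
  | true :: true :: u =>
    rw [Tfun, Tfun_eq (true :: u), basisStep]
    cases basisStep true (true :: u) <;> simp [Sfun, optSingle, pre_single]

lemma mono_single (w x : List Bool) :
    mono w (Finsupp.single x 1) = optSingle (basisRun w x) := by
  induction w with
  | nil => rfl
  | cons b w ih =>
    rw [mono, List.map_cons, List.prod_cons, Module.End.mul_apply, ← mono, ih, basisRun]
    cases basisRun w x with
    | none => simp [optSingle]
    | some y =>
      cases b <;> simp [sR, tR, optSingle, Finsupp.linearCombination_single, Sfun_eq, Tfun_eq]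

lemma basisRun_eq_of_mono_eq {u v : List Bool} (h : mono u = mono v) :
    basisRun u = basisRun v :=
  funext fun x => optSingle_injective <| by rw [← mono_single, ← mono_single, h]

lemma exists_basisRun_eq_some {w : List Bool} (hw : mono w ≠ 0) :
    ∃ x y, basisRun w x = some y := by
  contrapose! hw
  refine Finsupp.lhom_ext' fun x => LinearMap.ext_ring ?_
  rw [LinearMap.comp_apply, Finsupp.lsingle_apply, mono_single,
    Option.eq_none_iff_forall_ne_some.2 (hw x)]
  rfl

lemma head?_eq_of_basisStep_eq_some {b : Bool} {x y : List Bool} (h : basisStep b x = some y) :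
    x.head? = some b := by
  cases b <;> rcases x with _ | ⟨_ | _, _⟩ <;> simp_all [basisStep]

lemma weight_lt_of_basisStep_eq_some {b : Bool} {x y : List Bool}
    (h : basisStep b x = some y) : weight x < weight y := by
  match b, x, h with
  | false, false :: u, h | true, true :: false :: u, h =>
    cases Option.some_injective _ h; simp [weight]
  | true, true :: true :: u, h =>
    obtain ⟨z, hz, rfl⟩ := Option.map_eq_some_iff.1 h
    have := weight_lt_of_basisStep_eq_some hz
    simp only [weight, Bool.toNat_true, Bool.toNat_false] at this ⊢
    omega

lemma weight_add_length_le {w x y : List Bool} (h : basisRun w x = some y) :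
    weight x + w.length ≤ weight y := by
  induction w generalizing y with
  | nil => cases Option.some_injective _ h; simp
  | cons b w ih =>
    obtain ⟨z, hz, hzy⟩ := Option.bind_eq_some_iff.1 h
    have := weight_lt_of_basisStep_eq_some hzy
    have := ih hz
    simp only [List.length_cons]
    omega

lemma basisRun_append_singleton (w : List Bool) (b : Bool) (x : List Bool) :
    basisRun (w ++ [b]) x = (basisStep b x).bind (basisRun w) := by
  induction w with
  | nil => simp [basisRun]
  | cons a w ih => simp only [List.cons_append, basisRun, ih, Option.bind_assoc]

lemma eq_of_basisRun_eq_some {u v x y : List Bool} (hu : basisRun u x = some y)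
    (hv : basisRun v x = some y) : u = v := by
  induction u using List.reverseRecOn generalizing v x with
  | nil =>
    cases Option.some_injective _ hu
    simpa using weight_add_length_le hv
  | append_singleton u a ih =>
    rcases List.eq_nil_or_concat v with rfl | ⟨v, b, rfl⟩
    · cases Option.some_injective _ hv
      simpa using weight_add_length_le hu
    rw [List.concat_eq_append] at hv ⊢
    rw [basisRun_append_singleton] at hu hv
    obtain ⟨z, hxz, hzy⟩ := Option.bind_eq_some_iff.1 hu
    obtain ⟨z', hxz', hz'y⟩ := Option.bind_eq_some_iff.1 hv
    have hab : a = b := Option.some_injective _ <|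
      (head?_eq_of_basisStep_eq_some hxz).symm.trans (head?_eq_of_basisStep_eq_some hxz')
    subst hab
    cases hxz.symm.trans hxz'
    rw [ih hzy hz'y]

theorem monomials_freely_equal_general (u v : List Bool)
    (hu0 : mono u ≠ 0) (h : mono u = mono v) : u = v := by
  obtain ⟨x, y, hxy⟩ := exists_basisRun_eq_some hu0
  exact eq_of_basisRun_eq_some hxy (basisRun_eq_of_mono_eq h ▸ hxy)

/-- If `u` and `v` are nonzero monomials in the generators `s, t` of `R₂` and `u = v`
as elements of `R₂`, then `u` and `v` are freely equal (identical as words). -/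
theorem monomials_freely_equal (u v : List Bool) (hu : u ≠ []) (hv : v ≠ [])
    (hu0 : mono u ≠ 0) (hv0 : mono v ≠ 0) (h : mono u = mono v) : u = v :=
  monomials_freely_equal_general u v hu0 h

end
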